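/- Let p be a strictly positive joint probability mass function of discrete random variables X_1,…,X_N on a finite product of ranges, and let A, B ⊆ {1,…,N}. Let π(p) denote the probability mass function π(p)(x) = p_{X_{A∖B}|X_{A∩B}}(x_{A∖B} | x_{A∩B}) · p_{X_B}(x_B) · p_{X_{(A∪B)^c}}(x_{(A∪B)^c}). Then for every probability mass function q of the form q(x) = r(x_{A∖B} | x_{A∩B}) · s(x_B) · t(x_{(A∪B)^c}), where r is a strictly positive stochastic kernel and s, t are strictly positive probability mass functions, one has D(p ‖ q) = D(p ‖ π(p)) + D(π(p) ‖ q). In particular π(p) minimizes D(p ‖ q) over all q of this Markov-product form. -/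
import Mathlib

set_option linter.unusedSectionVars false


open Finset

variable {N : ℕ} {X : Fin N → Type} [∀ i, Fintype (X i)] [∀ i, DecidableEq (X i)]

/-- Restriction of an outcome `x` to the coordinates in `A`. -/
def restr (A : Finset (Fin N)) (x : ∀ i, X i) : ∀ i : {j // j ∈ A}, X i.1 :=
  fun i => x i.1

/-- Marginal of the joint pmf `p` on the coordinates in `A`. -/
noncomputable def marg (p : (∀ i, X i) → ℝ) (A : Finset (Fin N)) :
    (∀ i : {j // j ∈ A}, X i.1) → ℝ :=
  fun y => ∑ x ∈ Finset.univ.filter (fun x : ∀ i, X i => restr A x = y), p x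

/-- Kullback–Leibler divergence in bits between pmfs on a finite set. -/
noncomputable def KL {α : Type*} [Fintype α] (p q : α → ℝ) : ℝ :=
  ∑ a, p a * Real.logb 2 (p a / q a)

/-- The projection `π(p)(x) = p_{X_{A∖B}|X_{A∩B}}(x_{A∖B}|x_{A∩B}) · p_{X_B}(x_B) ·
p_{X_{(A∪B)ᶜ}}(x_{(A∪B)ᶜ})`. -/
noncomputable def piProj (p : (∀ i, X i) → ℝ) (A B : Finset (Fin N)) :
    (∀ i, X i) → ℝ :=
  fun x => marg p A (restr A x) / marg p (A ∩ B) (restr (A ∩ B) x) *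
    marg p B (restr B x) * marg p (A ∪ B)ᶜ (restr (A ∪ B)ᶜ x)

section Aux

variable (A B : Finset (Fin N))

def phiMap (x1 : ∀ i : {j // j ∈ A \ B}, X i.1) (x2 : ∀ i : {j // j ∈ A ∩ B}, X i.1)
    (x3 : ∀ i : {j // j ∈ B \ A}, X i.1) (x4 : ∀ i : {j // j ∈ (A ∪ B)ᶜ}, X i.1) :
    ∀ i, X i := fun i =>
  if h1 : i ∈ A \ B then x1 ⟨i, h1⟩
  else if h2 : i ∈ A ∩ B then x2 ⟨i, h2⟩
  else if h3 : i ∈ B \ A then x3 ⟨i, h3⟩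
  else x4 ⟨i, by
    simp only [Finset.mem_sdiff, Finset.mem_inter, not_and, not_not] at h1 h2 h3
    simp only [Finset.mem_compl, Finset.mem_union]
    tauto⟩

def mergeA (x1 : ∀ i : {j // j ∈ A \ B}, X i.1) (x2 : ∀ i : {j // j ∈ A ∩ B}, X i.1) :
    ∀ i : {j // j ∈ A}, X i.1 := fun i =>
  if h : i.1 ∈ A \ B then x1 ⟨i.1, h⟩
  else x2 ⟨i.1, by
    have hi := i.2
    simp only [Finset.mem_sdiff, not_and, not_not] at h
    exact Finset.mem_inter.2 ⟨hi, h hi⟩⟩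

def mergeB (x2 : ∀ i : {j // j ∈ A ∩ B}, X i.1) (x3 : ∀ i : {j // j ∈ B \ A}, X i.1) :
    ∀ i : {j // j ∈ B}, X i.1 := fun i =>
  if h : i.1 ∈ A ∩ B then x2 ⟨i.1, h⟩
  else x3 ⟨i.1, by
    have hi := i.2
    simp only [Finset.mem_inter, not_and] at h
    refine Finset.mem_sdiff.2 ⟨hi, fun hA => h hA hi⟩⟩

variable (x1 : ∀ i : {j // j ∈ A \ B}, X i.1) (x2 : ∀ i : {j // j ∈ A ∩ B}, X i.1)
    (x3 : ∀ i : {j // j ∈ B \ A}, X i.1) (x4 : ∀ i : {j // j ∈ (A ∪ B)ᶜ}, X i.1)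

lemma restr_phi_sdAB : restr (A \ B) (phiMap A B x1 x2 x3 x4) = x1 := by
  funext i
  obtain ⟨i, hi⟩ := i
  show phiMap A B x1 x2 x3 x4 i = _
  simp [phiMap, hi]

lemma restr_phi_inter : restr (A ∩ B) (phiMap A B x1 x2 x3 x4) = x2 := by
  funext i
  obtain ⟨i, hi⟩ := i
  have h1 : i ∉ A \ B := by
    simp only [Finset.mem_inter] at hi
    simp [Finset.mem_sdiff, hi.2]
  show phiMap A B x1 x2 x3 x4 i = _
  simp [phiMap, h1, hi]

lemma restr_phi_sdBA : restr (B \ A) (phiMap A B x1 x2 x3 x4) = x3 := by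
  funext i
  obtain ⟨i, hi⟩ := i
  have hi' := Finset.mem_sdiff.1 hi
  have h1 : i ∉ A \ B := by simp [Finset.mem_sdiff, hi'.2]
  have h2 : i ∉ A ∩ B := by simp [Finset.mem_inter, hi'.2]
  show phiMap A B x1 x2 x3 x4 i = _
  simp [phiMap, h1, h2, hi]

lemma restr_phi_compl : restr (A ∪ B)ᶜ (phiMap A B x1 x2 x3 x4) = x4 := by
  funext i
  obtain ⟨i, hi⟩ := i
  have hi' : i ∉ A ∧ i ∉ B := by
    have := Finset.mem_compl.1 hi
    simp only [Finset.mem_union] at this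
    tauto
  have h1 : i ∉ A \ B := by simp [Finset.mem_sdiff, hi'.1]
  have h2 : i ∉ A ∩ B := by simp [Finset.mem_inter, hi'.1]
  have h3 : i ∉ B \ A := by simp [Finset.mem_sdiff, hi'.2]
  show phiMap A B x1 x2 x3 x4 i = _
  simp [phiMap, h1, h2, h3]

lemma restr_phi_A : restr A (phiMap A B x1 x2 x3 x4) = mergeA A B x1 x2 := by
  funext i
  obtain ⟨i, hi⟩ := i
  show phiMap A B x1 x2 x3 x4 i = _
  by_cases h : i ∈ A \ B
  · simp [phiMap, mergeA, h]
  · have h2 : i ∈ A ∩ B := by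
      simp only [Finset.mem_sdiff, not_and, not_not] at h
      exact Finset.mem_inter.2 ⟨hi, h hi⟩
    simp [phiMap, mergeA, h, h2]

lemma restr_phi_B : restr B (phiMap A B x1 x2 x3 x4) = mergeB A B x2 x3 := by
  funext i
  obtain ⟨i, hi⟩ := i
  show phiMap A B x1 x2 x3 x4 i = _
  by_cases h : i ∈ A ∩ B
  · have h1 : i ∉ A \ B := by
      simp only [Finset.mem_inter] at h
      simp [Finset.mem_sdiff, h.2]
    simp [phiMap, mergeB, h, h1]
  · have h3 : i ∈ B \ A := by
      simp only [Finset.mem_inter, not_and] at h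
      exact Finset.mem_sdiff.2 ⟨hi, fun hA => h hA hi⟩
    have h1 : i ∉ A \ B := by
      have := (Finset.mem_sdiff.1 h3).2
      simp [Finset.mem_sdiff, this]
    simp [phiMap, mergeB, h, h1, h3]

end Aux

section Aux2
variable (A B : Finset (Fin N))

def eFull : ((∀ i : {j // j ∈ A \ B}, X i.1) × (∀ i : {j // j ∈ A ∩ B}, X i.1) ×
    (∀ i : {j // j ∈ B \ A}, X i.1) × (∀ i : {j // j ∈ (A ∪ B)ᶜ}, X i.1)) ≃ (∀ i, X i) where
  toFun q := phiMap A B q.1 q.2.1 q.2.2.1 q.2.2.2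
  invFun x := (restr (A \ B) x, restr (A ∩ B) x, restr (B \ A) x, restr (A ∪ B)ᶜ x)
  left_inv q := by
    obtain ⟨a, b, c, d⟩ := q
    simp only [restr_phi_sdAB, restr_phi_inter, restr_phi_sdBA, restr_phi_compl]
  right_inv x := by
    funext i
    show phiMap A B _ _ _ _ i = x i
    unfold phiMap
    split_ifs <;> rfl

lemma mergeA_inj {a x1 : ∀ i : {j // j ∈ A \ B}, X i.1} {b x2 : ∀ i : {j // j ∈ A ∩ B}, X i.1}
    (h : mergeA A B a b = mergeA A B x1 x2) : a = x1 ∧ b = x2 := by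
  constructor
  · funext i
    obtain ⟨i, hi⟩ := i
    have := congrFun h ⟨i, (Finset.mem_sdiff.1 hi).1⟩
    simpa [mergeA, hi] using this
  · funext i
    obtain ⟨i, hi⟩ := i
    have hns : i ∉ A \ B := by
      simp only [Finset.mem_inter] at hi
      simp [Finset.mem_sdiff, hi.2]
    have := congrFun h ⟨i, (Finset.mem_inter.1 hi).1⟩
    simpa [mergeA, hns] using this

lemma mergeB_inj {b x2 : ∀ i : {j // j ∈ A ∩ B}, X i.1} {c x3 : ∀ i : {j // j ∈ B \ A}, X i.1}
    (h : mergeB A B b c = mergeB A B x2 x3) : b = x2 ∧ c = x3 := by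
  constructor
  · funext i
    obtain ⟨i, hi⟩ := i
    have := congrFun h ⟨i, (Finset.mem_inter.1 hi).2⟩
    simpa [mergeB, hi] using this
  · funext i
    obtain ⟨i, hi⟩ := i
    have hni : i ∉ A ∩ B := by
      have := (Finset.mem_sdiff.1 hi).2
      simp [Finset.mem_inter, this]
    have := congrFun h ⟨i, (Finset.mem_sdiff.1 hi).1⟩
    simpa [mergeB, hni] using this

lemma sum_phi (f : (∀ i, X i) → ℝ) :
    ∑ x, f x = ∑ x1, ∑ x2, ∑ x3, ∑ x4, f (phiMap A B x1 x2 x3 x4) := by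
  rw [← Equiv.sum_comp (eFull A B (X := X)) f]
  simp only [eFull, Equiv.coe_fn_mk]
  rw [Fintype.sum_prod_type]
  exact Finset.sum_congr rfl fun a _ => by
    rw [Fintype.sum_prod_type]
    exact Finset.sum_congr rfl fun b _ => by rw [Fintype.sum_prod_type]

lemma marg_A_eq (p : (∀ i, X i) → ℝ) (x1 x2) :
    marg p A (mergeA A B x1 x2) = ∑ x3, ∑ x4, p (phiMap A B x1 x2 x3 x4) := by
  rw [marg, Finset.sum_filter, sum_phi A B]
  have hcond : ∀ a b c d, (restr A (phiMap A B a b c d) = mergeA A B x1 x2) ↔ (a = x1 ∧ b = x2) := by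
    intro a b c d
    rw [restr_phi_A]
    exact ⟨mergeA_inj A B, by rintro ⟨rfl, rfl⟩; rfl⟩
  simp only [hcond, ite_and]
  simp [Finset.sum_ite_eq', Finset.sum_ite_irrel]


lemma marg_B_eq (p : (∀ i, X i) → ℝ) (x2 x3) :
    marg p B (mergeB A B x2 x3) = ∑ x1, ∑ x4, p (phiMap A B x1 x2 x3 x4) := by
  rw [marg, Finset.sum_filter, sum_phi A B]
  have hcond : ∀ a b c d, (restr B (phiMap A B a b c d) = mergeB A B x2 x3) ↔ (b = x2 ∧ c = x3) := by
    intro a b c d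
    rw [restr_phi_B]
    exact ⟨mergeB_inj A B, by rintro ⟨rfl, rfl⟩; rfl⟩
  simp only [hcond, ite_and]
  simp [Finset.sum_ite_eq', Finset.sum_ite_irrel]

lemma marg_inter_eq (p : (∀ i, X i) → ℝ) (x2) :
    marg p (A ∩ B) x2 = ∑ x1, ∑ x3, ∑ x4, p (phiMap A B x1 x2 x3 x4) := by
  rw [marg, Finset.sum_filter, sum_phi A B]
  simp only [restr_phi_inter]
  simp [Finset.sum_ite_eq', Finset.sum_ite_irrel]

lemma marg_compl_eq (p : (∀ i, X i) → ℝ) (x4) :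
    marg p (A ∪ B)ᶜ x4 = ∑ x1, ∑ x2, ∑ x3, p (phiMap A B x1 x2 x3 x4) := by
  rw [marg, Finset.sum_filter, sum_phi A B]
  simp only [restr_phi_compl]
  simp [Finset.sum_ite_eq', Finset.sum_ite_irrel]

end Aux2

lemma sum4_bc {α β γ δ : Type*} [Fintype α] [Fintype β] [Fintype γ] [Fintype δ]
    (F : α → β → γ → δ → ℝ) :
    ∑ a, ∑ b, ∑ c, ∑ d, F a b c d = ∑ b, ∑ c, ∑ a, ∑ d, F a b c d := by
  rw [Finset.sum_comm]
  exact Finset.sum_congr rfl fun b _ => Finset.sum_comm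

lemma sum4_d {α β γ δ : Type*} [Fintype α] [Fintype β] [Fintype γ] [Fintype δ]
    (F : α → β → γ → δ → ℝ) :
    ∑ a, ∑ b, ∑ c, ∑ d, F a b c d = ∑ d, ∑ a, ∑ b, ∑ c, F a b c d := by
  calc ∑ a, ∑ b, ∑ c, ∑ d, F a b c d
      = ∑ a, ∑ b, ∑ d, ∑ c, F a b c d :=
        Finset.sum_congr rfl fun a _ => Finset.sum_congr rfl fun b _ => Finset.sum_comm
    _ = ∑ a, ∑ d, ∑ b, ∑ c, F a b c d :=
        Finset.sum_congr rfl fun a _ => Finset.sum_comm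
    _ = ∑ d, ∑ a, ∑ b, ∑ c, F a b c d := Finset.sum_comm

lemma sum_mul_sep {α β : Type*} [Fintype α] [Fintype β] (k : ℝ) (u : α → ℝ) (v : β → ℝ) :
    ∑ a, ∑ b, k * u a * v b = k * (∑ a, u a) * (∑ b, v b) := by
  simp only [← Finset.mul_sum, ← Finset.sum_mul]

lemma KL_nonneg {α : Type*} [Fintype α] (u v : α → ℝ) (hu : ∀ x, 0 < u x)
    (hv : ∀ x, 0 < v x) (h1 : ∑ x, u x = 1) (h2 : ∑ x, v x ≤ 1) : 0 ≤ KL u v := by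
  have hKL : KL u v = (∑ a, u a * Real.log (u a / v a)) / Real.log 2 := by
    simp only [KL, Real.logb, ← mul_div_assoc, ← Finset.sum_div]
  rw [hKL]
  apply div_nonneg _ (Real.log_nonneg one_le_two)
  have key : ∀ a, u a - v a ≤ u a * Real.log (u a / v a) := by
    intro a
    have hlog : Real.log (v a / u a) ≤ v a / u a - 1 :=
      Real.log_le_sub_one_of_pos (div_pos (hv a) (hu a))
    have h3 : u a * Real.log (v a / u a) ≤ u a * (v a / u a - 1) :=
      mul_le_mul_of_nonneg_left hlog (le_of_lt (hu a))
    have hu' : u a ≠ 0 := (hu a).ne'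
    have h4 : u a * (v a / u a - 1) = v a - u a := by
      field_simp
    have h5 : Real.log (u a / v a) = -Real.log (v a / u a) := by
      rw [← Real.log_inv, inv_div]
    rw [h5]
    nlinarith
  calc (0:ℝ) = (∑ a, u a) - (∑ a, v a) + ((∑ a, v a) - 1) := by rw [h1]; ring
    _ ≤ (∑ a, u a) - (∑ a, v a) := by linarith
    _ = ∑ a, (u a - v a) := by rw [Finset.sum_sub_distrib]
    _ ≤ ∑ a, u a * Real.log (u a / v a) := Finset.sum_le_sum fun a _ => key a

lemma marg_pos (p : (∀ i, X i) → ℝ) (hp : ∀ x, 0 < p x) (hne : Nonempty (∀ i, X i))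
    (C : Finset (Fin N)) (y : ∀ i : {j // j ∈ C}, X i.1) : 0 < marg p C y := by
  apply Finset.sum_pos (fun x _ => hp x)
  obtain ⟨x0⟩ := hne
  refine ⟨fun i => if h : i ∈ C then y ⟨i, h⟩ else x0 i, ?_⟩
  simp only [Finset.mem_filter, Finset.mem_univ, true_and]
  funext i
  obtain ⟨i, hi⟩ := i
  show (if h : i ∈ C then y ⟨i, h⟩ else x0 i) = y ⟨i, hi⟩
  rw [dif_pos hi]

section Aux3
variable (A B : Finset (Fin N))

def eB : ((∀ i : {j // j ∈ A ∩ B}, X i.1) × (∀ i : {j // j ∈ B \ A}, X i.1)) ≃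
    (∀ i : {j // j ∈ B}, X i.1) where
  toFun z := mergeB A B z.1 z.2
  invFun y := (fun i => y ⟨i.1, (Finset.mem_inter.1 i.2).2⟩,
               fun i => y ⟨i.1, (Finset.mem_sdiff.1 i.2).1⟩)
  left_inv := by
    rintro ⟨b, c⟩
    refine Prod.ext ?_ ?_
    · funext i
      obtain ⟨i, hi⟩ := i
      simp [mergeB, hi]
    · funext i
      obtain ⟨i, hi⟩ := i
      have hni : i ∉ A ∩ B := by
        have := (Finset.mem_sdiff.1 hi).2
        simp [Finset.mem_inter, this]
      simp [mergeB, hni]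
  right_inv y := by
    funext i
    obtain ⟨i, hi⟩ := i
    by_cases h : i ∈ A ∩ B <;> simp [mergeB, h]

lemma sum_mergeB (f : (∀ i : {j // j ∈ B}, X i.1) → ℝ) :
    ∑ y, f y = ∑ x2, ∑ x3, f (mergeB A B x2 x3) := by
  rw [← Equiv.sum_comp (eB A B (X := X)) f]
  simp only [eB, Equiv.coe_fn_mk]
  rw [Fintype.sum_prod_type]

variable (p : (∀ i, X i) → ℝ)

lemma hMAsum : ∀ b, ∑ a, marg p A (mergeA A B a b) = marg p (A ∩ B) b := by
  intro b
  simp only [marg_A_eq, marg_inter_eq]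

lemma hMBsum : ∀ b, ∑ c, marg p B (mergeB A B b c) = marg p (A ∩ B) b := by
  intro b
  simp only [marg_B_eq, marg_inter_eq]
  exact Finset.sum_comm

lemma hM2sum (hsum : ∑ x, p x = 1) : ∑ b, marg p (A ∩ B) b = 1 := by
  simp only [marg_inter_eq]
  rw [Finset.sum_comm]
  rw [← sum_phi A B p]
  exact hsum

lemma hM4sum (hsum : ∑ x, p x = 1) : ∑ d, marg p (A ∪ B)ᶜ d = 1 := by
  simp only [marg_compl_eq]
  rw [← sum4_d, ← sum_phi A B p]
  exact hsum

-- cross terms with p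
lemma crossP1 (g : _ → _ → ℝ) :
    ∑ a, ∑ b, ∑ c, ∑ d, p (phiMap A B a b c d) * g a b =
      ∑ a, ∑ b, marg p A (mergeA A B a b) * g a b := by
  refine Finset.sum_congr rfl fun a _ => Finset.sum_congr rfl fun b _ => ?_
  rw [marg_A_eq]
  simp only [← Finset.sum_mul]

lemma crossP2 (g : _ → _ → ℝ) :
    ∑ a, ∑ b, ∑ c, ∑ d, p (phiMap A B a b c d) * g b c =
      ∑ b, ∑ c, marg p B (mergeB A B b c) * g b c := by
  rw [sum4_bc]
  refine Finset.sum_congr rfl fun b _ => Finset.sum_congr rfl fun c _ => ?_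
  rw [marg_B_eq]
  simp only [← Finset.sum_mul]

lemma crossP3 (g : _ → ℝ) :
    ∑ a, ∑ b, ∑ c, ∑ d, p (phiMap A B a b c d) * g d =
      ∑ d, marg p (A ∪ B)ᶜ d * g d := by
  rw [sum4_d]
  refine Finset.sum_congr rfl fun d _ => ?_
  rw [marg_compl_eq]
  simp only [← Finset.sum_mul]

end Aux3

section Aux4
variable (A B : Finset (Fin N)) (p : (∀ i, X i) → ℝ)

lemma crossPi1 (hpos : ∀ b, marg p (A ∩ B) b ≠ 0) (hsum : ∑ x, p x = 1) (g : _ → _ → ℝ) :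
    ∑ a, ∑ b, ∑ c, ∑ d, (marg p A (mergeA A B a b) / marg p (A ∩ B) b *
        marg p B (mergeB A B b c) * marg p (A ∪ B)ᶜ d) * g a b =
      ∑ a, ∑ b, marg p A (mergeA A B a b) * g a b := by
  refine Finset.sum_congr rfl fun a _ => Finset.sum_congr rfl fun b _ => ?_
  have h1 : ∑ c, ∑ d, (marg p A (mergeA A B a b) / marg p (A ∩ B) b *
      marg p B (mergeB A B b c) * marg p (A ∪ B)ᶜ d) * g a b =
      (marg p A (mergeA A B a b) / marg p (A ∩ B) b * g a b) *
        (∑ c, marg p B (mergeB A B b c)) * (∑ d, marg p (A ∪ B)ᶜ d) := by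
    rw [← sum_mul_sep]
    exact Finset.sum_congr rfl fun c _ => Finset.sum_congr rfl fun d _ => by ring
  rw [h1, hMBsum, hM4sum A B p hsum, mul_one]
  have h2 : marg p A (mergeA A B a b) / marg p (A ∩ B) b * g a b * marg p (A ∩ B) b =
      marg p A (mergeA A B a b) * g a b * (marg p (A ∩ B) b / marg p (A ∩ B) b) := by ring
  rw [h2, div_self (hpos b), mul_one]

lemma crossPi2 (hpos : ∀ b, marg p (A ∩ B) b ≠ 0) (hsum : ∑ x, p x = 1) (g : _ → _ → ℝ) :
    ∑ a, ∑ b, ∑ c, ∑ d, (marg p A (mergeA A B a b) / marg p (A ∩ B) b *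
        marg p B (mergeB A B b c) * marg p (A ∪ B)ᶜ d) * g b c =
      ∑ b, ∑ c, marg p B (mergeB A B b c) * g b c := by
  rw [sum4_bc]
  refine Finset.sum_congr rfl fun b _ => Finset.sum_congr rfl fun c _ => ?_
  have h1 : ∑ a, ∑ d, (marg p A (mergeA A B a b) / marg p (A ∩ B) b *
      marg p B (mergeB A B b c) * marg p (A ∪ B)ᶜ d) * g b c =
      (marg p B (mergeB A B b c) * g b c) *
        (∑ a, marg p A (mergeA A B a b) / marg p (A ∩ B) b) * (∑ d, marg p (A ∪ B)ᶜ d) := by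
    rw [← sum_mul_sep]
    exact Finset.sum_congr rfl fun a _ => Finset.sum_congr rfl fun d _ => by ring
  rw [h1, ← Finset.sum_div, hMAsum, div_self (hpos b), mul_one, hM4sum A B p hsum, mul_one]

lemma crossPi3 (hpos : ∀ b, marg p (A ∩ B) b ≠ 0) (hsum : ∑ x, p x = 1) (g : _ → ℝ) :
    ∑ a, ∑ b, ∑ c, ∑ d, (marg p A (mergeA A B a b) / marg p (A ∩ B) b *
        marg p B (mergeB A B b c) * marg p (A ∪ B)ᶜ d) * g d =
      ∑ d, marg p (A ∪ B)ᶜ d * g d := by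
  rw [sum4_d]
  refine Finset.sum_congr rfl fun d _ => ?_
  rw [Finset.sum_comm]
  have h1 : ∀ b, ∑ a, ∑ c, (marg p A (mergeA A B a b) / marg p (A ∩ B) b *
      marg p B (mergeB A B b c) * marg p (A ∪ B)ᶜ d) * g d =
      (marg p (A ∪ B)ᶜ d * g d) *
        (∑ a, marg p A (mergeA A B a b) / marg p (A ∩ B) b) * (∑ c, marg p B (mergeB A B b c)) := by
    intro b
    rw [← sum_mul_sep]
    exact Finset.sum_congr rfl fun a _ => Finset.sum_congr rfl fun c _ => by ring
  simp only [h1, ← Finset.sum_div, hMAsum, hMBsum]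
  have h2 : ∀ b, marg p (A ∪ B)ᶜ d * g d * (marg p (A ∩ B) b / marg p (A ∩ B) b) *
      marg p (A ∩ B) b = marg p (A ∪ B)ᶜ d * g d * marg p (A ∩ B) b := by
    intro b
    rw [div_self (hpos b), mul_one]
  simp only [h2, ← Finset.mul_sum, hM2sum A B p hsum, mul_one]

lemma sumPi (hpos : ∀ b, marg p (A ∩ B) b ≠ 0) (hsum : ∑ x, p x = 1) :
    ∑ a, ∑ b, ∑ c, ∑ d, (marg p A (mergeA A B a b) / marg p (A ∩ B) b *
        marg p B (mergeB A B b c) * marg p (A ∪ B)ᶜ d) = 1 := by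
  have := crossPi3 A B p hpos hsum (fun _ => 1)
  simp only [mul_one] at this
  rw [this, hM4sum A B p hsum]

end Aux4

/-- Pythagorean identity `D(p ‖ q) = D(p ‖ π(p)) + D(π(p) ‖ q)` for every `q` of the
Markov-product form `q(x) = r(x_{A∖B}|x_{A∩B})·s(x_B)·t(x_{(A∪B)ᶜ})`; in particular
`π(p)` minimizes `D(p ‖ ·)` over all such `q`. -/
theorem stmt4 (p : (∀ i, X i) → ℝ) (hp : ∀ x, 0 < p x) (hsum : ∑ x, p x = 1)
    (A B : Finset (Fin N))
    (r : (∀ i : {j // j ∈ A ∩ B}, X i.1) → (∀ i : {j // j ∈ A \ B}, X i.1) → ℝ)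
    (hrpos : ∀ z y, 0 < r z y) (hrsum : ∀ z, ∑ y, r z y = 1)
    (s : (∀ i : {j // j ∈ B}, X i.1) → ℝ) (hspos : ∀ y, 0 < s y) (hssum : ∑ y, s y = 1)
    (t : (∀ i : {j // j ∈ (A ∪ B)ᶜ}, X i.1) → ℝ) (htpos : ∀ y, 0 < t y)
    (htsum : ∑ y, t y = 1) :
    KL p (fun x => r (restr (A ∩ B) x) (restr (A \ B) x) * s (restr B x) *
        t (restr (A ∪ B)ᶜ x)) =
      KL p (piProj p A B) +
        KL (piProj p A B) (fun x => r (restr (A ∩ B) x) (restr (A \ B) x) * s (restr B x) *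
          t (restr (A ∪ B)ᶜ x)) ∧
    KL p (piProj p A B) ≤
      KL p (fun x => r (restr (A ∩ B) x) (restr (A \ B) x) * s (restr B x) *
        t (restr (A ∪ B)ᶜ x)) := by
  have hne : Nonempty (∀ i, X i) := by
    by_contra h
    rw [not_nonempty_iff] at h
    rw [Finset.univ_eq_empty, Finset.sum_empty] at hsum
    exact one_ne_zero hsum.symm
  have hM : ∀ (C : Finset (Fin N)) y, 0 < marg p C y := fun C y => marg_pos p hp hne C y
  have hM2ne : ∀ b, marg p (A ∩ B) b ≠ 0 := fun b => (hM _ b).ne'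
  set F : (∀ i, X i) → ℝ := fun x => r (restr (A ∩ B) x) (restr (A \ B) x) * s (restr B x) *
    t (restr (A ∪ B)ᶜ x) with hFdef
  have hFpos : ∀ x, 0 < F x := fun x => mul_pos (mul_pos (hrpos _ _) (hspos _)) (htpos _)
  have hpipos : ∀ x, 0 < piProj p A B x := fun x =>
    mul_pos (mul_pos (div_pos (hM _ _) (hM _ _)) (hM _ _)) (hM _ _)
  have hpi : ∀ a b c d, piProj p A B (phiMap A B a b c d) =
      marg p A (mergeA A B a b) / marg p (A ∩ B) b * marg p B (mergeB A B b c) *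
        marg p (A ∪ B)ᶜ d := by
    intro a b c d
    unfold piProj
    rw [restr_phi_A, restr_phi_inter, restr_phi_B, restr_phi_compl]
  have hF : ∀ a b c d, F (phiMap A B a b c d) = r b a * s (mergeB A B b c) * t d := by
    intro a b c d
    simp only [hFdef]
    rw [restr_phi_inter, restr_phi_sdAB, restr_phi_B, restr_phi_compl]
  have hFsum : ∑ x, F x = 1 := by
    rw [sum_phi A B]
    simp only [hF]
    rw [sum4_bc]
    have hre : ∀ b c, ∑ (a : ∀ i : {j // j ∈ A \ B}, X i.1),
        ∑ (d : ∀ i : {j // j ∈ (A ∪ B)ᶜ}, X i.1), r b a * s (mergeB A B b c) * t d =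
        s (mergeB A B b c) * (∑ a, r b a) * (∑ d, t d) := by
      intro b c
      rw [← sum_mul_sep]
      exact Finset.sum_congr rfl fun a _ => Finset.sum_congr rfl fun d _ => by ring
    simp only [hre, hrsum, htsum, mul_one, one_mul]
    rw [← sum_mergeB A B s]
    exact hssum
  have hpisum : ∑ x, piProj p A B x = 1 := by
    rw [sum_phi A B]
    simp only [hpi]
    exact sumPi A B p hM2ne hsum
  have key : ∑ x, p x * Real.logb 2 (piProj p A B x / F x) =
      ∑ x, piProj p A B x * Real.logb 2 (piProj p A B x / F x) := by
    rw [sum_phi A B (fun x => p x * Real.logb 2 (piProj p A B x / F x)),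
        sum_phi A B (fun x => piProj p A B x * Real.logb 2 (piProj p A B x / F x))]
    simp only [hpi, hF]
    have hsplit : ∀ a b c d,
        Real.logb 2 ((marg p A (mergeA A B a b) / marg p (A ∩ B) b * marg p B (mergeB A B b c) *
            marg p (A ∪ B)ᶜ d) / (r b a * s (mergeB A B b c) * t d)) =
          Real.logb 2 (marg p A (mergeA A B a b) / (marg p (A ∩ B) b * r b a)) +
            (Real.logb 2 (marg p B (mergeB A B b c) / s (mergeB A B b c)) +
             Real.logb 2 (marg p (A ∪ B)ᶜ d / t d)) := by
      intro a b c d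
      have hr' : r b a ≠ 0 := (hrpos b a).ne'
      have hs' : s (mergeB A B b c) ≠ 0 := (hspos _).ne'
      have ht' : t d ≠ 0 := (htpos d).ne'
      have hm2' : marg p (A ∩ B) b ≠ 0 := hM2ne b
      have e1 : (marg p A (mergeA A B a b) / marg p (A ∩ B) b * marg p B (mergeB A B b c) *
          marg p (A ∪ B)ᶜ d) / (r b a * s (mergeB A B b c) * t d) =
          (marg p A (mergeA A B a b) / (marg p (A ∩ B) b * r b a)) *
            ((marg p B (mergeB A B b c) / s (mergeB A B b c)) *
             (marg p (A ∪ B)ᶜ d / t d)) := by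
        field_simp
      have h1ne : marg p A (mergeA A B a b) / (marg p (A ∩ B) b * r b a) ≠ 0 :=
        (div_pos (hM _ _) (mul_pos (hM _ _) (hrpos b a))).ne'
      have h2ne : marg p B (mergeB A B b c) / s (mergeB A B b c) ≠ 0 :=
        (div_pos (hM _ _) (hspos _)).ne'
      have h3ne : marg p (A ∪ B)ᶜ d / t d ≠ 0 := (div_pos (hM _ _) (htpos _)).ne'
      rw [e1, Real.logb_mul h1ne (mul_ne_zero h2ne h3ne), Real.logb_mul h2ne h3ne]
    simp only [hsplit, mul_add, Finset.sum_add_distrib]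
    rw [crossP1 A B p (fun a b => Real.logb 2 (marg p A (mergeA A B a b) /
          (marg p (A ∩ B) b * r b a))),
       crossP2 A B p (fun b c => Real.logb 2 (marg p B (mergeB A B b c) / s (mergeB A B b c))),
       crossP3 A B p (fun d => Real.logb 2 (marg p (A ∪ B)ᶜ d / t d)),
       crossPi1 A B p hM2ne hsum (fun a b => Real.logb 2 (marg p A (mergeA A B a b) /
          (marg p (A ∩ B) b * r b a))),
       crossPi2 A B p hM2ne hsum (fun b c => Real.logb 2 (marg p B (mergeB A B b c) /
          s (mergeB A B b c))),
       crossPi3 A B p hM2ne hsum (fun d => Real.logb 2 (marg p (A ∪ B)ᶜ d / t d))]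
  have hlogsplit : ∀ x, Real.logb 2 (p x / F x) =
      Real.logb 2 (p x / piProj p A B x) + Real.logb 2 (piProj p A B x / F x) := by
    intro x
    rw [← Real.logb_mul (div_pos (hp x) (hpipos x)).ne' (div_pos (hpipos x) (hFpos x)).ne']
    congr 1
    have h1 : piProj p A B x ≠ 0 := (hpipos x).ne'
    have h2 : F x ≠ 0 := (hFpos x).ne'
    field_simp
  have main1 : KL p F = KL p (piProj p A B) + KL (piProj p A B) F := by
    unfold KL
    simp only [hlogsplit, mul_add, Finset.sum_add_distrib]
    congr 1
  have main2 : 0 ≤ KL (piProj p A B) F :=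
    KL_nonneg _ _ hpipos hFpos hpisum (le_of_eq hFsum)
  exact ⟨main1, by rw [main1]; linarith⟩
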